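/- Let L ≥ 2, and for l = 1,…,L−1 let W^l be a real n_{l+1}×n_l matrix and b^l ∈ ℝ^{n_{l+1}}. Define the ReLU network f : ℝ^{n_1} → ℝ^{n_L} by the recursion x^{l+1} = max(0, W^l x^l + b^l) componentwise for l = 1,…,L−2 and x^L = W^{L−1} x^{L−1} + b^{L−1}. Fix an input x^1 ∈ ℝ^{n_1}, and suppose that for each hidden layer l = 1,…,L−2 the bounds LB^{l+1}, UB^{l+1} ∈ ℝ^{n_{l+1}} satisfy LB^{l+1}_i ≤ (W^l x^l + b^l)_i ≤ UB^{l+1}_i along the network trajectory of x^1. Then vectors x^2,…,x^L satisfy the big-M constraints for some binary vectors σ^2,…,σ^{L−1} (i.e., for each hidden layer l: W^l x^l + b^l ≤ x^{l+1}, W^l x^l + b^l − diag(LB^{l+1})(𝟏 − σ^{l+1}) ≥ x^{l+1}, x^{l+1} ≤ diag(UB^{l+1})σ^{l+1}, x^{l+1} ≥ 0, σ^{l+1} ∈ {0,1}^{n_{l+1}}; and x^L = W^{L−1} x^{L−1} + b^{L−1}) if and only if x^{l+1} equals the layer output of the network at input x^1 for each l, and in particular x^L = f(x^1). (The mixed-integer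 encoding of a ReLU network with valid bounds represents exactly the graph of the network.) -/

import Mathlib

/-! Neuron by neuron, the indicator `σ = 0` forces the output to be `0 ≥ v` and `σ = 1` forces
it to be `v ≥ 0`, so any feasible point carries the ReLU value `max 0 v`, whatever the bounds.
Conversely, the activation pattern `σ = [v > 0]` of the actual trajectory is feasible exactly
because the bounds are valid there: `lb ≤ v` is needed for an inactive neuron, `v ≤ ub` for an
active one. An induction over the layers turns this into equality with the trajectory. -/

open Matrix

/-- The trajectory of the hidden (ReLU) layers of a feedforward network:
`reluTraj n W b x1 0 = x1` and
`reluTraj n W b x1 (l+1) = max (0, W^l (reluTraj n W b x1 l) + b^l)` componentwise.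
(Layers are indexed from `0`, so paper layer `l ∈ {1,…,L}` is index `l-1`.) -/
def reluTraj (n : ℕ → ℕ) (W : ∀ l : ℕ, Matrix (Fin (n (l + 1))) (Fin (n l)) ℝ)
    (b : ∀ l : ℕ, Fin (n (l + 1)) → ℝ) (x1 : Fin (n 0) → ℝ) :
    ∀ l : ℕ, Fin (n l) → ℝ
  | 0 => x1
  | (l + 1) => fun i => max 0 (((W l).mulVec (reluTraj n W b x1 l) + b l) i)

/-- The big-M constraints of one neuron: pre-activation `v` with bounds `lb ≤ v ≤ ub`,
output `y`, binary indicator `s` (encoded as a real constrained to `{0, 1}`). -/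
def BigMReLU (lb ub v y s : ℝ) : Prop :=
  (s = 0 ∨ s = 1) ∧ v ≤ y ∧ y ≤ v - (1 - s) * lb ∧ y ≤ s * ub ∧ 0 ≤ y

theorem BigMReLU.eq_max_zero {lb ub v y s : ℝ} (h : BigMReLU lb ub v y s) : y = max 0 v := by
  obtain ⟨hs | hs, hvy, hy_lb, hy_ub, hy⟩ := h <;> subst hs
  · have hy0 : y = 0 := le_antisymm (by simpa using hy_ub) hy
    rw [hy0, max_eq_left (hy0 ▸ hvy)]
  · have hyv : y = v := le_antisymm (by simpa using hy_lb) hvy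
    rw [hyv, max_eq_right (hyv ▸ hy)]

theorem bigMReLU_max_zero {lb ub v : ℝ} (hlb : lb ≤ v) (hub : v ≤ ub) :
    BigMReLU lb ub v (max 0 v) (if 0 < v then 1 else 0) := by
  by_cases hv : 0 < v
  · simp only [if_pos hv, max_eq_right hv.le]
    exact ⟨Or.inr rfl, le_rfl, by simp, by simpa using hub, hv.le⟩
  · rw [not_lt] at hv
    simp only [if_neg hv.not_gt, max_eq_left hv]
    exact ⟨Or.inl rfl, hv, by linarith, by simp, le_rfl⟩

def reluLayer {m k : ℕ} (W : Matrix (Fin m) (Fin k) ℝ) (b : Fin m → ℝ) (x : Fin k → ℝ) :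
    Fin m → ℝ :=
  fun i => max 0 ((W *ᵥ x + b) i)

theorem forall_le_eq_reluTraj_iff {n : ℕ → ℕ}
    {W : ∀ l : ℕ, Matrix (Fin (n (l + 1))) (Fin (n l)) ℝ} {b : ∀ l : ℕ, Fin (n (l + 1)) → ℝ}
    {x1 : Fin (n 0) → ℝ} {xs : ∀ l : ℕ, Fin (n l) → ℝ} (K : ℕ) :
    (∀ l ≤ K, xs l = reluTraj n W b x1 l) ↔
      xs 0 = x1 ∧ ∀ l < K, xs (l + 1) = reluLayer (W l) (b l) (xs l) := by
  constructor
  · intro htraj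
    refine ⟨htraj 0 K.zero_le, fun l hl => ?_⟩
    rw [htraj (l + 1) hl, htraj l hl.le]
    rfl
  · rintro ⟨hx1, hlayer⟩ l
    induction l with
    | zero => exact fun _ => hx1
    | succ l ih =>
      intro hl
      rw [hlayer l hl, ih (Nat.le_of_succ_le hl)]
      rfl

theorem relu_network_bigM_graph_general (L : ℕ) (n : ℕ → ℕ)
    (W : ∀ l : ℕ, Matrix (Fin (n (l + 1))) (Fin (n l)) ℝ)
    (b : ∀ l : ℕ, Fin (n (l + 1)) → ℝ)
    (x1 : Fin (n 0) → ℝ) (LB UB : ∀ l : ℕ, Fin (n (l + 1)) → ℝ)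
    (hbounds : ∀ l, l < L - 2 → ∀ i,
      LB l i ≤ ((W l).mulVec (reluTraj n W b x1 l) + b l) i ∧
      ((W l).mulVec (reluTraj n W b x1 l) + b l) i ≤ UB l i)
    (xs : ∀ l : ℕ, Fin (n l) → ℝ) (hx1 : xs 0 = x1) :
    ((∃ σ : ∀ l : ℕ, Fin (n (l + 1)) → ℝ,
        ∀ l, l < L - 2 → ∀ i,
          (σ l i = 0 ∨ σ l i = 1) ∧
          ((W l).mulVec (xs l) + b l) i ≤ xs (l + 1) i ∧
          xs (l + 1) i ≤ ((W l).mulVec (xs l) + b l) i - (1 - σ l i) * LB l i ∧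
          xs (l + 1) i ≤ σ l i * UB l i ∧ 0 ≤ xs (l + 1) i) ∧
      xs (L - 2 + 1) = (W (L - 2)).mulVec (xs (L - 2)) + b (L - 2)) ↔
    ((∀ l, l ≤ L - 2 → xs l = reluTraj n W b x1 l) ∧
      xs (L - 2 + 1) =
        (W (L - 2)).mulVec (reluTraj n W b x1 (L - 2)) + b (L - 2)) := by
  constructor
  · rintro ⟨⟨σ, hσ⟩, hout⟩
    have htraj : ∀ l ≤ L - 2, xs l = reluTraj n W b x1 l :=
      (forall_le_eq_reluTraj_iff _).2
        ⟨hx1, fun l hl => funext fun i => BigMReLU.eq_max_zero (hσ l hl i)⟩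
    exact ⟨htraj, by rw [hout, htraj _ le_rfl]⟩
  · rintro ⟨htraj, hout⟩
    have hlayer := ((forall_le_eq_reluTraj_iff _).1 htraj).2
    refine ⟨⟨fun l i => if 0 < (W l *ᵥ reluTraj n W b x1 l + b l) i then 1 else 0,
      fun l hl i => ?_⟩, by rw [hout, htraj _ le_rfl]⟩
    rw [hlayer l hl, htraj l hl.le]
    exact bigMReLU_max_zero (hbounds l hl i).1 (hbounds l hl i).2

/-- The big-M mixed-integer encoding of a ReLU network (hidden ReLU layers for
`l = 0,…,L-3` and a final affine layer), with pre-activation bounds that are valid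
along the network trajectory of the input `x1`, represents exactly the graph of the
network: vectors `xs 1, …, xs (L-1)` satisfy the big-M constraints for some binary
vectors `σ` iff each `xs (l+1)` equals the corresponding layer output of the network
at input `x1`; in particular the last variable equals the network output `f x1`.
(0-indexed: the output layer is `xs (L-2+1) = xs (L-1)`.) -/
theorem relu_network_bigM_graph (L : ℕ) (hL : 2 ≤ L) (n : ℕ → ℕ)
    (W : ∀ l : ℕ, Matrix (Fin (n (l + 1))) (Fin (n l)) ℝ)
    (b : ∀ l : ℕ, Fin (n (l + 1)) → ℝ)
    (x1 : Fin (n 0) → ℝ) (LB UB : ∀ l : ℕ, Fin (n (l + 1)) → ℝ)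
    (hbounds : ∀ l, l < L - 2 → ∀ i,
      LB l i ≤ ((W l).mulVec (reluTraj n W b x1 l) + b l) i ∧
      ((W l).mulVec (reluTraj n W b x1 l) + b l) i ≤ UB l i)
    (xs : ∀ l : ℕ, Fin (n l) → ℝ) (hx1 : xs 0 = x1) :
    ((∃ σ : ∀ l : ℕ, Fin (n (l + 1)) → ℝ,
        ∀ l, l < L - 2 → ∀ i,
          (σ l i = 0 ∨ σ l i = 1) ∧
          ((W l).mulVec (xs l) + b l) i ≤ xs (l + 1) i ∧
          xs (l + 1) i ≤ ((W l).mulVec (xs l) + b l) i - (1 - σ l i) * LB l i ∧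
          xs (l + 1) i ≤ σ l i * UB l i ∧ 0 ≤ xs (l + 1) i) ∧
      xs (L - 2 + 1) = (W (L - 2)).mulVec (xs (L - 2)) + b (L - 2)) ↔
    ((∀ l, l ≤ L - 2 → xs l = reluTraj n W b x1 l) ∧
      xs (L - 2 + 1) =
        (W (L - 2)).mulVec (reluTraj n W b x1 (L - 2)) + b (L - 2)) :=
  relu_network_bigM_graph_general L n W b x1 LB UB hbounds xs hx1
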